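/- Let n, m be positive integers, A an n×n real matrix, B an n×m real matrix, Q and Q_f symmetric positive semidefinite n×n real matrices, R a symmetric positive definite m×m real matrix, t_f > 0, and r₀ ∈ ℝⁿ. Define M = [[A, −B R⁻¹ Bᵀ], [−Q, −Aᵀ]], H(t) = [I 0]·exp(−t M)·[I; Q_f], G(t) = [0 I]·exp(−t M)·[I; Q_f], and assume H(t_f) is invertible. Let ψ(t) = G(t_f − t)·H(t_f)⁻¹·r₀, let u(t) = −R⁻¹ Bᵀ ψ(t), and let r(t) = H(t_f − t)·H(t_f)⁻¹·r₀ be its trajectory. Then for every continuous control ũ : [0, t_f] → ℝᵐ and every continuously differentiable trajectory r̃ : [0, t_f] → ℝⁿ satisfying r̃'(t) = A r̃(t) + B ũ(t) on [0, t_f] with r̃(0) = r₀, the cost J(ũ, r̃) = r̃(t_f)ᵀ Q_f r̃(t_f) + ∫₀^{t_f} ( r̃(t)ᵀ Q r̃(t) + ũ(t)ᵀ R ũ(t) ) dt satisfies J(u, r) ≤ J(ũ, r̃); i.e., u is a globally optimal control for the finite-horizon linear-quadratic problem. -/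

import Mathlib

/-!
Write `δ = q - r` and `w = v - u` for the deviation of a competitor from the candidate. Since `Q`,
`Q_f`, `R` are symmetric, the cost difference is the (nonnegative) cost of `(δ, w)` plus twice the
cross terms `Q_f r(t_f) ⬝ δ(t_f) + ∫ (Q r ⬝ δ + R u ⬝ w)`. The candidate is built from the flow of
the Hamiltonian matrix `M`, so `(r, ψ)` solves `r' = A r + B u`, `ψ' = -Q r - Aᵀ ψ` with
`R u = -Bᵀ ψ`, `r(0) = r₀` and `ψ(t_f) = Q_f r(t_f)`. Along any admissible `δ` this makes
`(ψ ⬝ δ)' = -(Q r ⬝ δ + R u ⬝ w)`, and as `δ(0) = 0` the cross terms cancel.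
-/

open Matrix Set

theorem Matrix.IsSymm.dotProduct_mulVec_comm {ι R : Type*} [Fintype ι] [CommSemiring R]
    {S : Matrix ι ι R} (hS : S.IsSymm) (x y : ι → R) :
    x ⬝ᵥ S *ᵥ y = y ⬝ᵥ S *ᵥ x := by
  rw [dotProduct_mulVec, ← mulVec_transpose, hS.eq, dotProduct_comm]

theorem Matrix.IsSymm.dotProduct_mulVec_sub_dotProduct_mulVec {ι R : Type*} [Fintype ι]
    [CommRing R] {S : Matrix ι ι R} (hS : S.IsSymm) (x y : ι → R) :
    x ⬝ᵥ S *ᵥ x - y ⬝ᵥ S *ᵥ y = (x - y) ⬝ᵥ S *ᵥ (x - y) + 2 * (S *ᵥ y ⬝ᵥ (x - y)) := by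
  simp only [mulVec_sub, dotProduct_sub, sub_dotProduct, dotProduct_comm (S *ᵥ y),
    hS.dotProduct_mulVec_comm x y]
  ring

theorem HasDerivAt.dotProduct {𝕜 ι : Type*} [NontriviallyNormedField 𝕜] [Fintype ι]
    {f g : 𝕜 → ι → 𝕜} {f' g' : ι → 𝕜} {t : 𝕜} (hf : HasDerivAt f f' t) (hg : HasDerivAt g g' t) :
    HasDerivAt (fun s => f s ⬝ᵥ g s) (f' ⬝ᵥ g t + f t ⬝ᵥ g') t := by
  have h := HasDerivAt.fun_sum (u := Finset.univ) fun i _ =>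
    (hasDerivAt_pi.1 hf i).mul (hasDerivAt_pi.1 hg i)
  rw [Finset.sum_add_distrib] at h
  exact h

theorem hasDerivAt_exp_smul_mulVec {ι : Type*} [Fintype ι] [DecidableEq ι]
    (M : Matrix ι ι ℝ) (x : ι → ℝ) (t : ℝ) :
    HasDerivAt (fun s : ℝ => NormedSpace.exp (s • M) *ᵥ x)
      (M *ᵥ NormedSpace.exp (t • M) *ᵥ x) t := by
  -- `NormedSpace.exp` only sees the topology, so any normed algebra structure will do.
  let _ : NormedRing (Matrix ι ι ℝ) := Matrix.linftyOpNormedRing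
  let _ : NormedAlgebra ℝ (Matrix ι ι ℝ) := Matrix.linftyOpNormedAlgebra
  have h := (LinearMap.toContinuousLinearMap
    (LinearMap.applyₗ x ∘ₗ Matrix.toLin'.toLinearMap)).hasFDerivAt.comp_hasDerivAt t
      (hasDerivAt_exp_smul_const' M t)
  simp only [Function.comp_def, LinearMap.coe_toContinuousLinearMap', LinearMap.coe_comp,
    LinearEquiv.coe_coe, LinearMap.applyₗ_apply_apply, toLin'_apply] at h
  rwa [mulVec_mulVec]

section Continuity

variable {α ι κ R : Type*} [TopologicalSpace α] [Fintype ι] [TopologicalSpace R]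
  [NonUnitalNonAssocSemiring R] [IsTopologicalSemiring R] {s : Set α}

theorem ContinuousOn.dotProduct {x y : α → ι → R} (hx : ContinuousOn x s)
    (hy : ContinuousOn y s) : ContinuousOn (fun t => x t ⬝ᵥ y t) s :=
  (continuous_fst.dotProduct continuous_snd).comp_continuousOn (hx.prodMk hy)

theorem ContinuousOn.const_mulVec (S : Matrix κ ι R) {x : α → ι → R}
    (hx : ContinuousOn x s) : ContinuousOn (fun t => S *ᵥ x t) s :=
  (continuous_const.matrix_mulVec continuous_id).comp_continuousOn hx

end Continuity

noncomputable def lqCost {ι κ : Type*} [Fintype ι] [Fintype κ] (Q Qf : Matrix ι ι ℝ)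
    (R : Matrix κ κ ℝ) (tf : ℝ) (q : ℝ → ι → ℝ) (v : ℝ → κ → ℝ) : ℝ :=
  q tf ⬝ᵥ Qf *ᵥ q tf + ∫ t in (0 : ℝ)..tf, (q t ⬝ᵥ Q *ᵥ q t + v t ⬝ᵥ R *ᵥ v t)

section Verification

variable {ι κ : Type*} [Fintype ι] [Fintype κ] {A : Matrix ι ι ℝ} {B : Matrix ι κ ℝ}
  {Q Qf : Matrix ι ι ℝ} {R : Matrix κ κ ℝ} {r ψ q : ℝ → ι → ℝ} {u v : ℝ → κ → ℝ}

theorem hasDerivAt_costate_dotProduct_sub {t : ℝ}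
    (hr : HasDerivAt r (A *ᵥ r t + B *ᵥ u t) t)
    (hψ : HasDerivAt ψ (-(Q *ᵥ r t) - Aᵀ *ᵥ ψ t) t)
    (hq : HasDerivAt q (A *ᵥ q t + B *ᵥ v t) t) (hu : R *ᵥ u t = -(Bᵀ *ᵥ ψ t)) :
    HasDerivAt (fun s => ψ s ⬝ᵥ (q s - r s))
      (-(Q *ᵥ r t ⬝ᵥ (q t - r t) + R *ᵥ u t ⬝ᵥ (v t - u t))) t := by
  refine (hψ.dotProduct (hq.sub hr)).congr_deriv ?_
  have hA : ψ t ⬝ᵥ A *ᵥ (q t - r t) = Aᵀ *ᵥ ψ t ⬝ᵥ (q t - r t) := by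
    rw [dotProduct_mulVec, mulVec_transpose]
  have hB : ψ t ⬝ᵥ B *ᵥ (v t - u t) = -(R *ᵥ u t ⬝ᵥ (v t - u t)) := by
    rw [dotProduct_mulVec, ← mulVec_transpose, hu, neg_dotProduct, neg_neg]
  rw [Pi.sub_apply, add_sub_add_comm, ← mulVec_sub, ← mulVec_sub, dotProduct_add, hA, hB,
    sub_dotProduct, neg_dotProduct]
  ring

theorem lqCost_sub_lqCost (hQ : Q.IsSymm) (hQf : Qf.IsSymm) (hR : R.IsSymm) {tf : ℝ}
    (htf : 0 ≤ tf)
    (hr : ∀ t ∈ Icc 0 tf, HasDerivAt r (A *ᵥ r t + B *ᵥ u t) t)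
    (hψ : ∀ t ∈ Icc 0 tf, HasDerivAt ψ (-(Q *ᵥ r t) - Aᵀ *ᵥ ψ t) t)
    (hu : ∀ t ∈ Icc 0 tf, R *ᵥ u t = -(Bᵀ *ᵥ ψ t)) (huc : ContinuousOn u (Icc 0 tf))
    (hψf : ψ tf = Qf *ᵥ r tf)
    (hq : ∀ t ∈ Icc 0 tf, HasDerivAt q (A *ᵥ q t + B *ᵥ v t) t)
    (hvc : ContinuousOn v (Icc 0 tf)) (h0 : q 0 = r 0) :
    lqCost Q Qf R tf q v - lqCost Q Qf R tf r u =
      (q tf - r tf) ⬝ᵥ Qf *ᵥ (q tf - r tf) + ∫ t in (0 : ℝ)..tf,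
        ((q t - r t) ⬝ᵥ Q *ᵥ (q t - r t) + (v t - u t) ⬝ᵥ R *ᵥ (v t - u t)) := by
  have hrc : ContinuousOn r (Icc 0 tf) := fun t ht => (hr t ht).continuousAt.continuousWithinAt
  have hqc : ContinuousOn q (Icc 0 tf) := fun t ht => (hq t ht).continuousAt.continuousWithinAt
  have hint : ∀ {x : ℝ → ι → ℝ} {w : ℝ → κ → ℝ}, ContinuousOn x (Icc 0 tf) →
      ContinuousOn w (Icc 0 tf) → IntervalIntegrable
        (fun t => x t ⬝ᵥ Q *ᵥ x t + w t ⬝ᵥ R *ᵥ w t) MeasureTheory.volume 0 tf :=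
    fun hx hw => ContinuousOn.intervalIntegrable <| by
      rw [uIcc_of_le htf]
      exact (hx.dotProduct (hx.const_mulVec Q)).add (hw.dotProduct (hw.const_mulVec R))
  have hcross : ContinuousOn
      (fun t => Q *ᵥ r t ⬝ᵥ (q t - r t) + R *ᵥ u t ⬝ᵥ (v t - u t)) (uIcc 0 tf) := by
    rw [uIcc_of_le htf]
    exact ((hrc.const_mulVec Q).dotProduct (hqc.sub hrc)).add
      ((huc.const_mulVec R).dotProduct (hvc.sub huc))
  have hcostate : ∫ t in (0 : ℝ)..tf, (Q *ᵥ r t ⬝ᵥ (q t - r t) + R *ᵥ u t ⬝ᵥ (v t - u t)) =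
      -(Qf *ᵥ r tf ⬝ᵥ (q tf - r tf)) := by
    have hW : ∀ t ∈ uIcc 0 tf, HasDerivAt (fun s => ψ s ⬝ᵥ (q s - r s))
        (-(Q *ᵥ r t ⬝ᵥ (q t - r t) + R *ᵥ u t ⬝ᵥ (v t - u t))) t := by
      rw [uIcc_of_le htf]
      exact fun t ht => hasDerivAt_costate_dotProduct_sub (hr t ht) (hψ t ht) (hq t ht) (hu t ht)
    rw [← neg_neg (∫ t in (0 : ℝ)..tf, _), ← intervalIntegral.integral_neg,
      intervalIntegral.integral_eq_sub_of_hasDerivAt hW hcross.neg.intervalIntegrable]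
    simp [h0, hψf]
  have hrunning : ∀ t,
      (q t ⬝ᵥ Q *ᵥ q t + v t ⬝ᵥ R *ᵥ v t) - (r t ⬝ᵥ Q *ᵥ r t + u t ⬝ᵥ R *ᵥ u t) =
        ((q t - r t) ⬝ᵥ Q *ᵥ (q t - r t) + (v t - u t) ⬝ᵥ R *ᵥ (v t - u t)) +
          2 * (Q *ᵥ r t ⬝ᵥ (q t - r t) + R *ᵥ u t ⬝ᵥ (v t - u t)) := by
    intro t
    rw [add_sub_add_comm, hQ.dotProduct_mulVec_sub_dotProduct_mulVec,
      hR.dotProduct_mulVec_sub_dotProduct_mulVec]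
    ring
  unfold lqCost
  rw [add_sub_add_comm, hQf.dotProduct_mulVec_sub_dotProduct_mulVec,
    ← intervalIntegral.integral_sub (hint hqc hvc) (hint hrc huc)]
  simp only [hrunning]
  rw [intervalIntegral.integral_add ?_ (hcross.intervalIntegrable.const_mul 2),
    intervalIntegral.integral_const_mul, hcostate]
  · ring
  · exact hint (hqc.sub hrc) (hvc.sub huc)

theorem lqCost_le_lqCost_of_hamiltonian (hQ : Q.PosSemidef) (hQf : Qf.PosSemidef)
    (hR : R.PosSemidef) {tf : ℝ} (htf : 0 ≤ tf)
    (hr : ∀ t ∈ Icc 0 tf, HasDerivAt r (A *ᵥ r t + B *ᵥ u t) t)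
    (hψ : ∀ t ∈ Icc 0 tf, HasDerivAt ψ (-(Q *ᵥ r t) - Aᵀ *ᵥ ψ t) t)
    (hu : ∀ t ∈ Icc 0 tf, R *ᵥ u t = -(Bᵀ *ᵥ ψ t)) (huc : ContinuousOn u (Icc 0 tf))
    (hψf : ψ tf = Qf *ᵥ r tf)
    (hq : ∀ t ∈ Icc 0 tf, HasDerivAt q (A *ᵥ q t + B *ᵥ v t) t)
    (hvc : ContinuousOn v (Icc 0 tf)) (h0 : q 0 = r 0) :
    lqCost Q Qf R tf r u ≤ lqCost Q Qf R tf q v := by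
  have hdiff := lqCost_sub_lqCost (isHermitian_iff_isSymm.1 hQ.1)
    (isHermitian_iff_isSymm.1 hQf.1) (isHermitian_iff_isSymm.1 hR.1) htf hr hψ hu huc hψf hq
    hvc h0
  have hterminal : 0 ≤ (q tf - r tf) ⬝ᵥ Qf *ᵥ (q tf - r tf) := by
    simpa using hQf.dotProduct_mulVec_nonneg (q tf - r tf)
  have hrunning : 0 ≤ ∫ t in (0 : ℝ)..tf,
      ((q t - r t) ⬝ᵥ Q *ᵥ (q t - r t) + (v t - u t) ⬝ᵥ R *ᵥ (v t - u t)) :=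
    intervalIntegral.integral_nonneg htf fun t _ => add_nonneg
      (by simpa using hQ.dotProduct_mulVec_nonneg (q t - r t))
      (by simpa using hR.dotProduct_mulVec_nonneg (v t - u t))
  linarith

end Verification

theorem hasDerivAt_components_exp_smul_fromBlocks_mulVec {ι κ : Type*} [Fintype ι] [Fintype κ]
    [DecidableEq ι] [DecidableEq κ] {A : Matrix ι ι ℝ} {B : Matrix ι κ ℝ} {C : Matrix κ ι ℝ}
    {D : Matrix κ κ ℝ} {c : ℝ} {x : ι ⊕ κ → ℝ} {y : ℝ → ι → ℝ} {p : ℝ → κ → ℝ}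
    (hy : ∀ s, y s = (NormedSpace.exp ((s - c) • fromBlocks A B C D) *ᵥ x) ∘ Sum.inl)
    (hp : ∀ s, p s = (NormedSpace.exp ((s - c) • fromBlocks A B C D) *ᵥ x) ∘ Sum.inr)
    (t : ℝ) : HasDerivAt y (A *ᵥ y t + B *ᵥ p t) t ∧ HasDerivAt p (C *ᵥ y t + D *ᵥ p t) t := by
  have hz := (hasDerivAt_exp_smul_mulVec (fromBlocks A B C D) x (t - c)).comp_sub_const t c
  rw [fromBlocks_mulVec] at hz
  constructor
  · rw [hy t, hp t, funext hy]
    exact hasDerivAt_pi.2 fun i => hasDerivAt_pi.1 hz (Sum.inl i)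
  · rw [hy t, hp t, funext hp]
    exact hasDerivAt_pi.2 fun i => hasDerivAt_pi.1 hz (Sum.inr i)

theorem stmt_1_general (n m : ℕ)
    (A : Matrix (Fin n) (Fin n) ℝ) (B : Matrix (Fin n) (Fin m) ℝ)
    (Q Qf : Matrix (Fin n) (Fin n) ℝ) (R : Matrix (Fin m) (Fin m) ℝ)
    (hQ : Q.PosSemidef) (hQf : Qf.PosSemidef) (hR : R.PosDef)
    (tf : ℝ) (htf : 0 < tf) (r₀ : Fin n → ℝ)
    (M : Matrix (Fin n ⊕ Fin n) (Fin n ⊕ Fin n) ℝ)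
    (hM : M = Matrix.fromBlocks A (-(B * R⁻¹ * Bᵀ)) (-Q) (-Aᵀ))
    (H G : ℝ → Matrix (Fin n) (Fin n) ℝ)
    (hH : ∀ t : ℝ, H t =
      Matrix.fromCols (1 : Matrix (Fin n) (Fin n) ℝ) (0 : Matrix (Fin n) (Fin n) ℝ) *
        NormedSpace.exp (-(t • M)) * Matrix.fromRows (1 : Matrix (Fin n) (Fin n) ℝ) Qf)
    (hG : ∀ t : ℝ, G t =
      Matrix.fromCols (0 : Matrix (Fin n) (Fin n) ℝ) (1 : Matrix (Fin n) (Fin n) ℝ) *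
        NormedSpace.exp (-(t • M)) * Matrix.fromRows (1 : Matrix (Fin n) (Fin n) ℝ) Qf)
    (hHtf : IsUnit (H tf))
    (r ψ : ℝ → Fin n → ℝ) (u : ℝ → Fin m → ℝ)
    (hr : ∀ t : ℝ, r t = (H (tf - t) * (H tf)⁻¹).mulVec r₀)
    (hψ : ∀ t : ℝ, ψ t = (G (tf - t) * (H tf)⁻¹).mulVec r₀)
    (hu : ∀ t : ℝ, u t = -((R⁻¹ * Bᵀ).mulVec (ψ t)))
    -- an arbitrary admissible competitor
    (v : ℝ → Fin m → ℝ) (q : ℝ → Fin n → ℝ)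
    (hvc : ContinuousOn v (Set.Icc 0 tf))
    (hdyn : ∀ t ∈ Set.Icc (0 : ℝ) tf,
      HasDerivAt q (A.mulVec (q t) + B.mulVec (v t)) t)
    (hinit : q 0 = r₀) :
    r tf ⬝ᵥ Qf.mulVec (r tf) +
        ∫ t in (0 : ℝ)..tf, (r t ⬝ᵥ Q.mulVec (r t) + u t ⬝ᵥ R.mulVec (u t)) ≤
      q tf ⬝ᵥ Qf.mulVec (q tf) +
        ∫ t in (0 : ℝ)..tf, (q t ⬝ᵥ Q.mulVec (q t) + v t ⬝ᵥ R.mulVec (v t)) := by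
  have hrz : ∀ s, r s =
      (NormedSpace.exp ((s - tf) • M) *ᵥ fromRows 1 Qf *ᵥ (H tf)⁻¹ *ᵥ r₀) ∘ Sum.inl := by
    intro s
    rw [hr, hH, ← neg_smul, neg_sub]
    simp only [← mulVec_mulVec, fromCols_mulVec, one_mulVec, zero_mulVec, add_zero]
  have hψz : ∀ s, ψ s =
      (NormedSpace.exp ((s - tf) • M) *ᵥ fromRows 1 Qf *ᵥ (H tf)⁻¹ *ᵥ r₀) ∘ Sum.inr := by
    intro s
    rw [hψ, hG, ← neg_smul, neg_sub]
    simp only [← mulVec_mulVec, fromCols_mulVec, one_mulVec, zero_mulVec, zero_add]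
  have hψf : ψ tf = Qf *ᵥ r tf := by
    simp [hrz, hψz]
  have hr0 : r 0 = r₀ := by
    rw [hr, sub_zero, mul_nonsing_inv _ ((isUnit_iff_isUnit_det _).1 hHtf), one_mulVec]
  have hRu : ∀ t, R *ᵥ u t = -(Bᵀ *ᵥ ψ t) := fun t => by
    rw [hu, mulVec_neg, mulVec_mulVec,
      mul_nonsing_inv_cancel_left R Bᵀ ((isUnit_iff_isUnit_det R).1 hR.isUnit)]
  subst hM
  have hflow := hasDerivAt_components_exp_smul_fromBlocks_mulVec hrz hψz
  have hrd : ∀ t, HasDerivAt r (A *ᵥ r t + B *ᵥ u t) t := fun t => by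
    rw [hu, mulVec_neg, mulVec_mulVec, ← Matrix.mul_assoc, ← neg_mulVec]
    exact (hflow t).1
  have hψd : ∀ t, HasDerivAt ψ (-(Q *ᵥ r t) - Aᵀ *ᵥ ψ t) t := fun t => by
    simpa only [neg_mulVec, sub_eq_add_neg] using (hflow t).2
  have huc : ContinuousOn u (Icc 0 tf) := by
    rw [funext hu]
    exact (continuous_const.matrix_mulVec
      (continuous_iff_continuousAt.2 fun t => (hψd t).continuousAt)).neg.continuousOn
  exact lqCost_le_lqCost_of_hamiltonian hQ hQf hR.posSemidef htf.le (fun t _ => hrd t)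
    (fun t _ => hψd t) (fun t _ => hRu t) huc hψf hdyn hvc (hinit.trans hr0.symm)

/-- The control `u(t) = −R⁻¹ Bᵀ ψ(t)` obtained from Pontryagin's
principle (with `ψ` and trajectory `r` built from the Hamiltonian matrix
`M = [[A, −B R⁻¹ Bᵀ], [−Q, −Aᵀ]]`) is globally optimal for the finite-horizon
linear-quadratic problem: its cost is ≤ the cost of any other admissible
continuous control `v` with C¹ trajectory `q` satisfying the dynamics and
initial condition. -/
theorem stmt_1 (n m : ℕ) (hn : 0 < n) (hm : 0 < m)
    (A : Matrix (Fin n) (Fin n) ℝ) (B : Matrix (Fin n) (Fin m) ℝ)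
    (Q Qf : Matrix (Fin n) (Fin n) ℝ) (R : Matrix (Fin m) (Fin m) ℝ)
    (hQ : Q.PosSemidef) (hQf : Qf.PosSemidef) (hR : R.PosDef)
    (tf : ℝ) (htf : 0 < tf) (r₀ : Fin n → ℝ)
    (M : Matrix (Fin n ⊕ Fin n) (Fin n ⊕ Fin n) ℝ)
    (hM : M = Matrix.fromBlocks A (-(B * R⁻¹ * Bᵀ)) (-Q) (-Aᵀ))
    (H G : ℝ → Matrix (Fin n) (Fin n) ℝ)
    (hH : ∀ t : ℝ, H t =
      Matrix.fromCols (1 : Matrix (Fin n) (Fin n) ℝ) (0 : Matrix (Fin n) (Fin n) ℝ) *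
        NormedSpace.exp (-(t • M)) * Matrix.fromRows (1 : Matrix (Fin n) (Fin n) ℝ) Qf)
    (hG : ∀ t : ℝ, G t =
      Matrix.fromCols (0 : Matrix (Fin n) (Fin n) ℝ) (1 : Matrix (Fin n) (Fin n) ℝ) *
        NormedSpace.exp (-(t • M)) * Matrix.fromRows (1 : Matrix (Fin n) (Fin n) ℝ) Qf)
    (hHtf : IsUnit (H tf))
    (r ψ : ℝ → Fin n → ℝ) (u : ℝ → Fin m → ℝ)
    (hr : ∀ t : ℝ, r t = (H (tf - t) * (H tf)⁻¹).mulVec r₀)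
    (hψ : ∀ t : ℝ, ψ t = (G (tf - t) * (H tf)⁻¹).mulVec r₀)
    (hu : ∀ t : ℝ, u t = -((R⁻¹ * Bᵀ).mulVec (ψ t)))
    -- an arbitrary admissible competitor
    (v : ℝ → Fin m → ℝ) (q : ℝ → Fin n → ℝ)
    (hvc : ContinuousOn v (Set.Icc 0 tf))
    (hdyn : ∀ t ∈ Set.Icc (0 : ℝ) tf,
      HasDerivAt q (A.mulVec (q t) + B.mulVec (v t)) t)
    (hinit : q 0 = r₀) :
    r tf ⬝ᵥ Qf.mulVec (r tf) +
        ∫ t in (0 : ℝ)..tf, (r t ⬝ᵥ Q.mulVec (r t) + u t ⬝ᵥ R.mulVec (u t)) ≤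
      q tf ⬝ᵥ Qf.mulVec (q tf) +
        ∫ t in (0 : ℝ)..tf, (q t ⬝ᵥ Q.mulVec (q t) + v t ⬝ᵥ R.mulVec (v t)) :=
  stmt_1_general n m A B Q Qf R hQ hQf hR tf htf r₀ M hM H G hH hG hHtf r ψ u hr hψ hu v q hvc hdyn
    hinit
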